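/- Let P(z_1,...,z_N) be translation invariant. Let P_der(z^{(a)}, z_{a+1},...,z_N) be the derived polynomial from fusing z_1,...,z_a (the coefficient of λ^{S_a} after substituting z_i = z^{(a)} + λξ_i, assuming it factors as R(ξ)·P_der). Let D_{a,1} be the largest power of (z^{(a)} - z_{a+1}) dividing P_der, and S_{a+1}, S_a the minimal total degrees of P in the first a+1 and a variables respectively. Then D_{a,1} ≥ S_{a+1} - S_a. -/

import Mathlib

/-!
By translation invariance the fusion expansion is `P(z + λξ, z_j) = P(λξ, z_j - z)`, so its
`λ^{S_a}` coefficient is `P_S(ξ, z_j - z)`, where `P_S` is the part of `P` of degree `S_a` in the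
first `a` variables. Every monomial of `P_S` has degree at least `S_{a+1} - S_a` in `z_{a+1}`, so
`(z - z_{a+1})^{S_{a+1} - S_a}` divides `R * P_der`, hence divides `P_der` because `R ≠ 0` does not
involve `z_{a+1}`.

`R ≠ 0` because the coefficient does not vanish: comparing lowest `T`-coefficients in the
translation identity `P(T(x + t), y) = P(Tx, y - Tt)` shows that `P_S` is invariant under
translations of the first `a` variables alone, and translating them to centre of mass `0`
recovers `P_S` from `P_S(ξ, z_j - z)`.
-/

open MvPolynomial

noncomputable section

/-- Variable type for the fusion of the first `a` variables: `Sum.inl i` are the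
auxiliary variables `ξ i`, `Sum.inr none` is the fused variable (center of mass)
`z`, and `Sum.inr (some j)` are the untouched variables `z j` for `a ≤ j`. -/
abbrev FVars (N : ℕ) := Fin N ⊕ Option (Fin N)

/-- The auxiliary variables `ξ i` for `i < a`, with the constraint `∑ ξ i = 0`
imposed by eliminating the last one. -/
def fuseXi (N a : ℕ) (i : Fin N) : MvPolynomial (FVars N) ℂ :=
  if i.val + 1 < a then X (Sum.inl i)
  else -(∑ j ∈ Finset.univ.filter (fun j : Fin N => j.val + 1 < a), X (Sum.inl j))

/-- Fusion substitution `z i = z + λ * ξ i` for `i < a`, where `λ` is the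
polynomial variable and `z = X (Sum.inr none)`. -/
def fuse (N a : ℕ) : MvPolynomial (Fin N) ℂ →ₐ[ℂ] Polynomial (MvPolynomial (FVars N) ℂ) :=
  MvPolynomial.aeval (fun i =>
    if i.val < a then Polynomial.C (X (Sum.inr none)) + Polynomial.X * Polynomial.C (fuseXi N a i)
    else Polynomial.C (X (Sum.inr (some i))))

/-- `Qcoeff N a P m` is the coefficient `Q^m` of `λ^m` in the fusion expansion of `P`. -/
def Qcoeff (N a : ℕ) (P : MvPolynomial (Fin N) ℂ) (m : ℕ) : MvPolynomial (FVars N) ℂ :=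
  (fuse N a P).coeff m

/-- `minDeg N P a` is `S_a`: the minimal total degree of `P` in `z 1, ..., z a`. -/
def minDeg (N : ℕ) (P : MvPolynomial (Fin N) ℂ) (a : ℕ) : ℕ :=
  sInf {d | ∃ mo ∈ P.support, d = ∑ i ∈ Finset.univ.filter (fun i : Fin N => i.val < a), mo i}

/-- Translation invariance of a multivariate polynomial. -/
def TransInv (N : ℕ) (P : MvPolynomial (Fin N) ℂ) : Prop :=
  ∀ c : ℂ, MvPolynomial.aeval (fun i : Fin N => X i + MvPolynomial.C c) P = P

/-- Symmetry of a multivariate polynomial. -/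
def SymmPoly (N : ℕ) (P : MvPolynomial (Fin N) ℂ) : Prop :=
  ∀ σ : Equiv.Perm (Fin N), rename ⇑σ P = P

section LowestCoefficient

variable {σ R A : Type*} [CommSemiring R] [CommSemiring A] [Algebra R A]

theorem aeval_X_pow_mul_monomial (w : σ → ℕ) (h : σ → Polynomial A) (d : σ →₀ ℕ) (c : R) :
    aeval (fun i => Polynomial.X ^ w i * h i) (monomial d c)
      = Polynomial.X ^ Finsupp.weight w d * aeval h (monomial d c) := by
  simp only [aeval_monomial, Finsupp.prod, mul_pow, Finset.prod_mul_distrib, ← pow_mul,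
    Finset.prod_pow_eq_pow_sum, Finsupp.weight_apply, Finsupp.sum, smul_eq_mul, mul_comm (d _)]
  ring

theorem coeff_aeval_X_pow_mul_of_le_weight (w : σ → ℕ) (h : σ → Polynomial A)
    {S : ℕ} {P : MvPolynomial σ R} (hS : ∀ d ∈ P.support, S ≤ Finsupp.weight w d) :
    (aeval (fun i => Polynomial.X ^ w i * h i) P).coeff S
      = aeval (fun i => (h i).eval 0) (weightedHomogeneousComponent w S P) := by
  classical
  have heval : ∀ q : MvPolynomial σ R, (aeval h q).eval 0 = aeval (fun i => (h i).eval 0) q :=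
    fun q => comp_aeval_apply (f := h) ((Polynomial.aeval (0 : A)).restrictScalars R) q
  conv_lhs => rw [P.as_sum]
  rw [weightedHomogeneousComponent_apply, map_sum, Polynomial.finsetSum_coeff, map_sum,
    Finset.sum_filter]
  refine Finset.sum_congr rfl fun d hd => ?_
  rw [aeval_X_pow_mul_monomial, Polynomial.coeff_X_pow_mul']
  rcases (hS d hd).eq_or_lt with heq | hlt
  · rw [if_pos heq.ge, ← heq, Nat.sub_self, Polynomial.coeff_zero_eq_eval_zero, heval, if_pos rfl]
  · rw [if_neg hlt.not_ge, if_neg hlt.ne']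

end LowestCoefficient

section Cancellation

variable {σ R : Type*} [CommRing R] [IsDomain R]

theorem X_sub_X_pow_dvd_of_dvd_mul {u v : σ} (huv : u ≠ v) {r f : MvPolynomial σ R}
    (hr : r ≠ 0) (hv : v ∉ r.vars) {n : ℕ} (h : (X u - X v) ^ n ∣ r * f) :
    (X u - X v) ^ n ∣ f := by
  classical
  -- `θ` substitutes `X v ↦ X u - T`, turning `X u - X v` into the variable `T`.
  set θ : MvPolynomial σ R →ₐ[R] Polynomial (MvPolynomial σ R) :=
    aeval fun s => if s = v then Polynomial.C (X u) - Polynomial.X else Polynomial.C (X s)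
  set ρ : Polynomial (MvPolynomial σ R) →ₐ[R] MvPolynomial σ R :=
    (Polynomial.aeval (X u - X v)).restrictScalars R
  have hρθ : ∀ g, ρ (θ g) = g := by
    intro g
    rw [comp_aeval_apply]
    conv_rhs => rw [← aeval_X_left_apply g]
    congr 2
    funext s
    by_cases hs : s = v <;> simp [ρ, hs]
  have hθr : θ r = Polynomial.C r := by
    refine hom_congr_vars (f₁ := θ.toRingHom) (f₂ := Polynomial.C) ?_ ?_ rfl
    · ext c; simp [θ]
    · intro s hs _
      simp [θ, show s ≠ v from fun e => hv (e ▸ hs)]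
  have hθ : Polynomial.X ^ n ∣ Polynomial.C r * θ f := by
    have hθp : θ (X u - X v) = Polynomial.X := by simp [θ, huv]
    simpa [hθp, hθr] using map_dvd θ h
  have hXr : ¬ Polynomial.X ∣ Polynomial.C r := by
    rwa [Polynomial.X_dvd_iff, Polynomial.coeff_C_zero]
  simpa [hρθ, ρ] using map_dvd ρ (Polynomial.prime_X.pow_dvd_of_dvd_mul_left n hXr hθ)

end Cancellation

theorem pow_dvd_aeval_of_le {σ R A : Type*} [CommSemiring R] [CommSemiring A] [Algebra R A]
    (f : σ → A) (v : σ) {n : ℕ} {P : MvPolynomial σ R} (h : ∀ d ∈ P.support, n ≤ d v) :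
    f v ^ n ∣ aeval f P := by
  classical
  rw [P.as_sum, map_sum]
  refine Finset.dvd_sum fun d hd => ?_
  rw [aeval_monomial]
  refine Dvd.dvd.mul_left ((pow_dvd_pow _ (h d hd)).trans ?_) _
  rcases Nat.eq_zero_or_pos (d v) with h0 | hpos
  · simp [h0]
  · exact Finset.dvd_prod_of_mem (fun i => f i ^ d i) (Finsupp.mem_support_iff.mpr hpos.ne')

namespace TransInv

variable {N : ℕ} {P : MvPolynomial (Fin N) ℂ}

theorem aeval_C_X_add_X (hP : TransInv N P) :
    aeval (fun i => Polynomial.C (X i) + Polynomial.X) P = Polynomial.C P := by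
  set F := aeval (fun i => Polynomial.C (X i) + Polynomial.X) P - Polynomial.C P
  have hroot : ∀ c : ℂ, F.IsRoot (C c : MvPolynomial (Fin N) ℂ) := by
    intro c
    have hev := comp_aeval_apply
      (f := fun i : Fin N => Polynomial.C (X i : MvPolynomial (Fin N) ℂ) + Polynomial.X)
      ((Polynomial.aeval (C c : MvPolynomial (Fin N) ℂ)).restrictScalars ℂ) P
    simp only [AlgHom.coe_restrictScalars', Polynomial.coe_aeval_eq_eval, Polynomial.eval_add,
      Polynomial.eval_C, Polynomial.eval_X] at hev
    rw [Polynomial.IsRoot, Polynomial.eval_sub, hev, hP c, Polynomial.eval_C, sub_self]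
  have hinf : {x | F.IsRoot x}.Infinite :=
    (Set.infinite_range_of_injective (C_injective (Fin N) ℂ)).mono
      (Set.range_subset_iff.mpr hroot)
  exact sub_eq_zero.mp (F.eq_zero_of_infinite_isRoot hinf)

theorem aeval_add (hP : TransInv N P) {B : Type*} [CommRing B] [Algebra ℂ B]
    (f : Fin N → B) (t : B) : aeval (fun i => f i + t) P = aeval f P := by
  have h := congrArg (Polynomial.aevalTower (aeval f) t) hP.aeval_C_X_add_X
  rw [comp_aeval_apply, Polynomial.aevalTower_C] at h
  simpa using h

end TransInv

def headWeight (N a : ℕ) : Fin N → ℕ := fun i => if i.val < a then 1 else 0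

theorem weight_headWeight (N a : ℕ) (d : Fin N →₀ ℕ) :
    Finsupp.weight (headWeight N a) d = ∑ i ∈ Finset.univ.filter (·.val < a), d i := by
  rw [Finsupp.weight_apply, Finsupp.sum_fintype _ _ (by simp), Finset.sum_filter]
  simp [headWeight]

theorem weight_headWeight_succ {N a : ℕ} (haN : a < N) (d : Fin N →₀ ℕ) :
    Finsupp.weight (headWeight N (a + 1)) d = Finsupp.weight (headWeight N a) d + d ⟨a, haN⟩ := by
  simp only [weight_headWeight, Finset.sum_filter]
  rw [show d ⟨a, haN⟩ = ∑ i : Fin N, if i = ⟨a, haN⟩ then d i else 0 by simp,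
    ← Finset.sum_add_distrib]
  refine Finset.sum_congr rfl fun i _ => ?_
  simp only [Fin.ext_iff]
  split_ifs <;> omega

section MinDeg

variable {N : ℕ} {P : MvPolynomial (Fin N) ℂ} {a : ℕ}

theorem minDeg_eq_sInf_weight :
    minDeg N P a = sInf {k | ∃ d ∈ P.support, k = Finsupp.weight (headWeight N a) d} := by
  simp only [minDeg, weight_headWeight]

theorem minDeg_le_weight {d : Fin N →₀ ℕ} (hd : d ∈ P.support) :
    minDeg N P a ≤ Finsupp.weight (headWeight N a) d := by
  rw [minDeg_eq_sInf_weight]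
  exact Nat.sInf_le ⟨d, hd, rfl⟩

theorem exists_weight_eq_minDeg (hP : P ≠ 0) :
    ∃ d ∈ P.support, Finsupp.weight (headWeight N a) d = minDeg N P a := by
  obtain ⟨d, hd⟩ := ne_zero_iff.mp hP
  have hne : {k | ∃ d ∈ P.support, k = Finsupp.weight (headWeight N a) d}.Nonempty :=
    ⟨_, d, mem_support_iff.mpr hd, rfl⟩
  obtain ⟨d, hd, h⟩ := Nat.sInf_mem hne
  exact ⟨d, hd, by rw [minDeg_eq_sInf_weight, h]⟩

theorem minDeg_zero : minDeg N 0 a = 0 := by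
  simp [minDeg]

end MinDeg

-- After the translation by `-z`, `fuse` is `z i ↦ λ ^ headWeight N a i * fusedCoord N a i`.
def fusedCoord (N a : ℕ) : Fin N → MvPolynomial (FVars N) ℂ := fun i =>
  if i.val < a then fuseXi N a i else X (Sum.inr (some i)) - X (Sum.inr none)

namespace TransInv

variable {N : ℕ} {P : MvPolynomial (Fin N) ℂ} {a S : ℕ}

theorem Qcoeff_eq_aeval_fusedCoord (hP : TransInv N P)
    (hS : ∀ d ∈ P.support, S ≤ Finsupp.weight (headWeight N a) d) :
    Qcoeff N a P S
      = aeval (fusedCoord N a) (weightedHomogeneousComponent (headWeight N a) S P) := by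
  have hfuse : (fun i : Fin N => if i.val < a then
        Polynomial.C (X (Sum.inr none)) + Polynomial.X * Polynomial.C (fuseXi N a i)
        else Polynomial.C (X (Sum.inr (some i))))
      = fun i => Polynomial.X ^ headWeight N a i * Polynomial.C (fusedCoord N a i)
        + Polynomial.C (X (Sum.inr none)) := by
    funext i
    unfold headWeight fusedCoord
    split_ifs
    · ring
    · rw [map_sub]; ring
  rw [Qcoeff, fuse, hfuse, hP.aeval_add, coeff_aeval_X_pow_mul_of_le_weight _ _ hS]
  simp

theorem aeval_add_head_weightedHomogeneousComponent (hP : TransInv N P)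
    (hS : ∀ d ∈ P.support, S ≤ Finsupp.weight (headWeight N a) d)
    {B : Type*} [CommRing B] [Algebra ℂ B] (f : Fin N → B) (t : B) :
    aeval (fun i => if i.val < a then f i + t else f i)
        (weightedHomogeneousComponent (headWeight N a) S P)
      = aeval f (weightedHomogeneousComponent (headWeight N a) S P) := by
  -- Both sides are the `T ^ S` coefficient of `P` at `z i = T (f i + t)` (head), `f i` (tail),
  -- written once directly and once after the translation `z ↦ z - T t`.
  have hshift : aeval (fun i => Polynomial.X ^ headWeight N a i
        * (if i.val < a then Polynomial.C (f i)
          else Polynomial.C (f i) - Polynomial.X * Polynomial.C t)) P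
      = aeval (fun i => Polynomial.X ^ headWeight N a i
        * Polynomial.C (if i.val < a then f i + t else f i)) P := by
    rw [← hP.aeval_add _ (Polynomial.X * Polynomial.C t)]
    refine congrArg (aeval · P) (funext fun i => ?_)
    unfold headWeight
    split_ifs
    · rw [map_add]; ring
    · ring
  have h := congrArg (Polynomial.coeff · S) hshift
  simp only [coeff_aeval_X_pow_mul_of_le_weight _ _ hS] at h
  simpa [apply_ite] using h.symm

end TransInv

def headSum (N a : ℕ) : MvPolynomial (Fin N) ℂ := ∑ j ∈ Finset.univ.filter (·.val < a), X j

/-- `ξ i ↦ z i - (z 0 + ⋯ + z (a-1)) / a`, `z ↦ 0`, `z j ↦ z j`: the `ξ` go to a point of the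
hyperplane `∑ ξ i = 0` that `fuseXi` imposes. -/
def unfuse (N a : ℕ) : MvPolynomial (FVars N) ℂ →ₐ[ℂ] MvPolynomial (Fin N) ℂ :=
  aeval (Sum.elim (fun i => X i - C (a : ℂ)⁻¹ * headSum N a) (fun o => o.elim 0 X))

theorem headSum_eq_X_add (N a : ℕ) (i : Fin N) (hi : i.val + 1 = a) :
    headSum N a = X i + ∑ j ∈ Finset.univ.filter (·.val + 1 < a), X j := by
  rw [headSum, ← Finset.sum_insert (by simp [hi])]
  congr 1
  ext j
  simp only [Finset.mem_filter, Finset.mem_univ, true_and, Finset.mem_insert, Fin.ext_iff]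
  omega

theorem card_filter_val_add_one_lt {N a : ℕ} (ha : a ≤ N) :
    (Finset.univ.filter fun j : Fin N => j.val + 1 < a).card = a - 1 := by
  rw [Finset.filter_congr (q := fun j : Fin N => j.val < a - 1) (fun j _ => by omega),
    Fin.card_filter_val_lt]
  omega

theorem unfuse_fusedCoord {N a : ℕ} (ha : a ≤ N) (i : Fin N) :
    unfuse N a (fusedCoord N a i)
      = if i.val < a then X i + -(C (a : ℂ)⁻¹ * headSum N a) else X i := by
  unfold fusedCoord
  split_ifs with hia
  · unfold fuseXi
    split_ifs with hi
    · simp [unfuse, sub_eq_add_neg]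
    · have hi' : i.val + 1 = a := by omega
      have hcard := card_filter_val_add_one_lt ha
      have ha0 : (a : ℂ) ≠ 0 := by exact_mod_cast (show a ≠ 0 by omega)
      simp only [map_neg, map_sum, unfuse, aeval_X, Sum.elim_inl, Finset.sum_sub_distrib,
        Finset.sum_const, hcard, nsmul_eq_mul]
      rw [headSum_eq_X_add N a i hi']
      have hcast : ((a - 1 : ℕ) : MvPolynomial (Fin N) ℂ) = C ((a : ℂ) - 1) := by
        rw [← map_natCast C, Nat.cast_sub (by omega)]; simp
      have hinv : (C ((a : ℂ) - 1) * C (a : ℂ)⁻¹ : MvPolynomial (Fin N) ℂ) = 1 - C (a : ℂ)⁻¹ := by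
        rw [← map_mul, sub_mul, mul_inv_cancel₀ ha0, one_mul, map_sub, map_one]
      rw [hcast]
      linear_combination (X i + ∑ j ∈ Finset.univ.filter (·.val + 1 < a), X j) * hinv
  · simp [unfuse]

namespace TransInv

variable {N : ℕ} {P : MvPolynomial (Fin N) ℂ} {a : ℕ}

theorem aeval_fusedCoord_ne_zero (hP : TransInv N P) (ha : a ≤ N) (hP0 : P ≠ 0) :
    aeval (fusedCoord N a) (weightedHomogeneousComponent (headWeight N a) (minDeg N P a) P)
      ≠ 0 := by
  set W := weightedHomogeneousComponent (headWeight N a) (minDeg N P a) P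
  have hW0 : W ≠ 0 := by
    obtain ⟨d, hd, hw⟩ := exists_weight_eq_minDeg (a := a) hP0
    refine ne_zero_iff.mpr ⟨d, ?_⟩
    rwa [coeff_weightedHomogeneousComponent, if_pos hw, ← mem_support_iff]
  intro h0
  apply hW0
  calc W = aeval (fun i => if i.val < a then X i + -(C (a : ℂ)⁻¹ * headSum N a) else X i) W :=
        by rw [hP.aeval_add_head_weightedHomogeneousComponent (fun d hd => minDeg_le_weight hd),
          aeval_X_left_apply]
    _ = unfuse N a (aeval (fusedCoord N a) W) := by
        simp only [comp_aeval_apply, unfuse_fusedCoord ha]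
    _ = 0 := by rw [h0, map_zero]

end TransInv

theorem stmt9_general (N a : ℕ) (haN : a < N) (P : MvPolynomial (Fin N) ℂ)
    (hTI : TransInv N P)
    (R Pder : MvPolynomial (FVars N) ℂ)
    (hR : ∀ v ∈ R.vars, ∃ i, v = Sum.inl i)
    (hfac : Qcoeff N a P (minDeg N P a) = R * Pder)
    (D : ℕ)
    (hD : (X (Sum.inr none) - X (Sum.inr (some ⟨a, haN⟩)) : MvPolynomial (FVars N) ℂ) ^ D ∣ Pder ∧
      ¬ (X (Sum.inr none) - X (Sum.inr (some ⟨a, haN⟩)) : MvPolynomial (FVars N) ℂ) ^ (D + 1) ∣ Pder) :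
    minDeg N P (a + 1) ≤ D + minDeg N P a := by
  by_cases hP0 : P = 0
  · simp [hP0, minDeg_zero]
  have hQ := hTI.Qcoeff_eq_aeval_fusedCoord (a := a) (fun d hd => minDeg_le_weight hd)
  have hR0 : R ≠ 0 := by
    rintro rfl
    exact hTI.aeval_fusedCoord_ne_zero haN.le hP0 (by rw [← hQ, hfac, zero_mul])
  by_contra! hlt
  refine hD.2 (X_sub_X_pow_dvd_of_dvd_mul (by simp) hR0 (fun hv => ?_) ?_)
  · obtain ⟨i, hi⟩ := hR _ hv
    cases hi
  have hdeg : ∀ d ∈ (weightedHomogeneousComponent (headWeight N a) (minDeg N P a) P).support,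
      D + 1 ≤ d ⟨a, haN⟩ := by
    intro d hd
    rw [mem_support_iff, coeff_weightedHomogeneousComponent, ite_ne_right_iff] at hd
    obtain ⟨hw, hd⟩ := hd
    have := minDeg_le_weight (a := a + 1) (mem_support_iff.mpr hd)
    rw [weight_headWeight_succ haN, hw] at this
    omega
  have hcoord : fusedCoord N a ⟨a, haN⟩ = -(X (Sum.inr none) - X (Sum.inr (some ⟨a, haN⟩))) := by
    simp [fusedCoord]
  rw [← hfac, hQ]
  exact (pow_dvd_pow_of_dvd (by rw [hcoord, dvd_neg]) _).trans
    (pow_dvd_aeval_of_le (fusedCoord N a) ⟨a, haN⟩ hdeg)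

/-- `D_{a,1} ≥ S_{a+1} - S_a` for a translation invariant polynomial
with a derived polynomial for the fusion of the first `a` variables. -/
theorem stmt9 (N a : ℕ) (haN : a < N) (P : MvPolynomial (Fin N) ℂ)
    (hTI : TransInv N P)
    (R Pder : MvPolynomial (FVars N) ℂ)
    (hR : ∀ v ∈ R.vars, ∃ i, v = Sum.inl i)
    (hPd : ∀ v ∈ Pder.vars, ∃ o, v = Sum.inr o)
    (hfac : Qcoeff N a P (minDeg N P a) = R * Pder)
    (D : ℕ)
    (hD : (X (Sum.inr none) - X (Sum.inr (some ⟨a, haN⟩)) : MvPolynomial (FVars N) ℂ) ^ D ∣ Pder ∧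
      ¬ (X (Sum.inr none) - X (Sum.inr (some ⟨a, haN⟩)) : MvPolynomial (FVars N) ℂ) ^ (D + 1) ∣ Pder) :
    minDeg N P (a + 1) ≤ D + minDeg N P a :=
  stmt9_general N a haN P hTI R Pder hR hfac D hD
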